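/- arXiv:1002.3886 — 2 statements merged into one kernel-verified Lean document; each statement's English description precedes it below -/
import Mathlib

section
/- Let X be a locally compact Hausdorff space, A a C*-algebra, and A₀(X) = C₀(X, A) the C*-algebra of continuous A-valued functions vanishing at infinity. For any y ∈ X and a ∈ A, there exists α ∈ A₀(X) with α(y) = a and ‖α‖ = ‖a‖. Moreover, if G : A₀(X) → W is a bounded left-A₀(X)-linear map into a left Hilbert A₀(X)-module W, then for α, α' ∈ A₀(X) with α(y) = α'(y), one has ⟨G(α) − G(α'), G(α) − G(α')⟩_{A₀(X)}(y) = 0. -/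
open scoped ZeroAtInfty

/-- Auxiliary: existence of sections with prescribed value and norm. -/
theorem statement18_aux {X A : Type*} [TopologicalSpace X] [LocallyCompactSpace X] [T2Space X]
    [NonUnitalCStarAlgebra A] (y : X) (a : A) :
    ∃ α : C₀(X, A), α y = a ∧ ‖α‖ = ‖a‖ := by
  obtain ⟨f, hf1, -, hfc, hf01⟩ :=
    exists_continuous_one_zero_of_isCompact (isCompact_singleton (x := y))
      isClosed_empty (Set.disjoint_empty _)
  have hsupp : HasCompactSupport (fun x => f x • a) :=
    hfc.comp_left (g := fun r : ℝ => r • a) (zero_smul ℝ a)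
  have hcont : Continuous (fun x => f x • a) := (map_continuous f).smul continuous_const
  set α : C₀(X, A) := ⟨⟨fun x => f x • a, hcont⟩, hsupp.is_zero_at_infty⟩ with hα
  have hαy : α y = a := by
    show f y • a = a
    rw [hf1 (Set.mem_singleton y)]; simp
  refine ⟨α, hαy, le_antisymm ?_ ?_⟩
  · rw [← ZeroAtInftyContinuousMap.norm_toBCF_eq_norm]
    refine (BoundedContinuousFunction.norm_le (norm_nonneg a)).2 fun x => ?_
    have h01 := hf01 x
    calc ‖f x • a‖ = |f x| * ‖a‖ := by rw [norm_smul, Real.norm_eq_abs]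
    _ ≤ 1 * ‖a‖ :=
      mul_le_mul_of_nonneg_right (abs_le.2 ⟨by linarith [h01.1], h01.2⟩) (norm_nonneg a)
    _ = ‖a‖ := one_mul _
  · have := BoundedContinuousFunction.norm_coe_le_norm α.toBCF y
    simpa [ZeroAtInftyContinuousMap.norm_toBCF_eq_norm, hαy] using this

/-- For a locally compact Hausdorff space `X` and a C*-algebra `A`:
(1) for any `y ∈ X` and `a ∈ A` there is `α ∈ A₀(X) = C₀(X, A)` with `α(y) = a` and
`‖α‖ = ‖a‖`; (2) if `G : A₀(X) → W` is a bounded left-`A₀(X)`-linear map into a left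
Hilbert `A₀(X)`-module `W` (so that `⟨Gβ, Gβ⟩ ≤ ‖G‖² ⟨β, β⟩`), then `α(y) = α'(y)`
implies `⟨G(α) − G(α'), G(α) − G(α')⟩(y) = 0`. -/
theorem statement18 {X A W : Type*} [TopologicalSpace X] [LocallyCompactSpace X] [T2Space X]
    [NonUnitalCStarAlgebra A] [PartialOrder A] [StarOrderedRing A]
    [AddCommGroup W]
    (ip : W → W → C₀(X, A))
    (G : C₀(X, A) → W)
    (hGsub : ∀ α α', G (α - α') = G α - G α')
    (C : ℝ) (hC : 0 ≤ C)
    -- the key inequality `0 ≤ ⟨Gβ, Gβ⟩ ≤ ‖G‖² ⟨β, β⟩`, pointwise on `X`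
    -- (the left inner product of `A₀(X)` over itself is `⟨β,β⟩(y) = β(y)·β(y)*`)
    (hkey : ∀ (β : C₀(X, A)) (y : X),
      0 ≤ ip (G β) (G β) y ∧ ip (G β) (G β) y ≤ C • (β y * star (β y))) :
    -- (1) sections with prescribed value and norm
    (∀ (y : X) (a : A), ∃ α : C₀(X, A), α y = a ∧ ‖α‖ = ‖a‖) ∧
    -- (2) the evaluation of `G` at `y` depends only on `α(y)`
    (∀ (α α' : C₀(X, A)) (y : X), α y = α' y →
      ip (G α - G α') (G α - G α') y = 0) := by
  refine ⟨fun y a => statement18_aux y a, fun α α' y h => ?_⟩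
  have h0 : (α - α') y = 0 := by
    simp [ZeroAtInftyContinuousMap.sub_apply, h]
  obtain ⟨h1, h2⟩ := hkey (α - α') y
  rw [hGsub] at h1 h2
  rw [h0] at h2
  simp only [zero_mul, smul_zero] at h2
  exact le_antisymm h2 h1
end

section
/- Let A be a C*-algebra with approximate unit {e_α}. For every quasi-multiplier q ∈ QM(A) one has ‖q‖ = sup{‖a q(c,d) b‖ : a, b, c, d ∈ A, all of norm ≤ 1} and moreover the net q(e_α a, b e_β) converges in norm to q(a,b) for all a, b ∈ A; consequently A is a strictly essential quasi-ideal of QM(A): sup{‖a ◁ q ▷ b‖ : ‖a‖ ≤ 1, ‖b‖ ≤ 1} = ‖q‖, where (a ◁ q ▷ b)(c,d) = q(ca, bd). -/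
open Filter

/-- The net `e_i * x * e_j` converges to `x`. -/
lemma aux_net {A : Type*} [NonUnitalCStarAlgebra A]
    {ι : Type*} (l : Filter ι) [l.NeBot] (e : ι → A)
    (he_norm : ∀ i, ‖e i‖ ≤ 1)
    (he_left : ∀ a : A, Tendsto (fun i => e i * a) l (nhds a))
    (he_right : ∀ a : A, Tendsto (fun i => a * e i) l (nhds a))
    (x : A) :
    Tendsto (fun p : ι × ι => e p.1 * x * e p.2) (l ×ˢ l) (nhds x) := by
  rw [tendsto_iff_norm_sub_tendsto_zero]
  have h1 : Tendsto (fun p : ι × ι => ‖e p.1 * x - x‖) (l ×ˢ l) (nhds 0) :=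
    (tendsto_iff_norm_sub_tendsto_zero.mp (he_left x)).comp tendsto_fst
  have h2 : Tendsto (fun p : ι × ι => ‖x * e p.2 - x‖) (l ×ˢ l) (nhds 0) :=
    (tendsto_iff_norm_sub_tendsto_zero.mp (he_right x)).comp tendsto_snd
  have hsum := h1.add h2
  rw [add_zero] at hsum
  refine squeeze_zero (fun p => norm_nonneg _) (fun p => ?_) hsum
  have hdecomp : e p.1 * x * e p.2 - x = (e p.1 * x - x) * e p.2 + (x * e p.2 - x) := by
    noncomm_ring
  calc ‖e p.1 * x * e p.2 - x‖
      ≤ ‖(e p.1 * x - x) * e p.2‖ + ‖x * e p.2 - x‖ := by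
        rw [hdecomp]; exact norm_add_le _ _
    _ ≤ ‖e p.1 * x - x‖ + ‖x * e p.2 - x‖ := by
        gcongr
        calc ‖(e p.1 * x - x) * e p.2‖ ≤ ‖e p.1 * x - x‖ * ‖e p.2‖ := norm_mul_le _ _
          _ ≤ ‖e p.1 * x - x‖ * 1 := by gcongr; exact he_norm _
          _ = ‖e p.1 * x - x‖ := mul_one _

/-- `sSup {‖c x d‖ : ‖c‖ ≤ 1, ‖d‖ ≤ 1} = ‖x‖`. -/
lemma aux_sup {A : Type*} [NonUnitalCStarAlgebra A]
    {ι : Type*} (l : Filter ι) [l.NeBot] (e : ι → A)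
    (he_norm : ∀ i, ‖e i‖ ≤ 1)
    (he_left : ∀ a : A, Tendsto (fun i => e i * a) l (nhds a))
    (he_right : ∀ a : A, Tendsto (fun i => a * e i) l (nhds a))
    (x : A) :
    sSup {s : ℝ | ∃ c d : A, ‖c‖ ≤ 1 ∧ ‖d‖ ≤ 1 ∧ s = ‖c * x * d‖} = ‖x‖ := by
  have hne : {s : ℝ | ∃ c d : A, ‖c‖ ≤ 1 ∧ ‖d‖ ≤ 1 ∧ s = ‖c * x * d‖}.Nonempty :=
    ⟨‖(0 : A) * x * 0‖, 0, 0, by simp, by simp, rfl⟩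
  have hub : ∀ s ∈ {s : ℝ | ∃ c d : A, ‖c‖ ≤ 1 ∧ ‖d‖ ≤ 1 ∧ s = ‖c * x * d‖}, s ≤ ‖x‖ := by
    rintro s ⟨c, d, hc, hd, rfl⟩
    calc ‖c * x * d‖ ≤ ‖c * x‖ * ‖d‖ := norm_mul_le _ _
      _ ≤ ‖c‖ * ‖x‖ * ‖d‖ := by gcongr; exact norm_mul_le _ _
      _ ≤ 1 * ‖x‖ * 1 := by gcongr
      _ = ‖x‖ := by ring
  refine le_antisymm (csSup_le hne hub) ?_
  have hnet := ((aux_net l e he_norm he_left he_right x).norm)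
  refine le_of_tendsto hnet (Eventually.of_forall fun p => ?_)
  exact le_csSup ⟨‖x‖, hub⟩ ⟨e p.1, e p.2, he_norm _, he_norm _, rfl⟩


/-- For a C*-algebra `A` with approximate unit `{e_α}` and any
quasi-multiplier `q ∈ QM(A)`: `‖q‖ = sup{‖a·q(c,d)·b‖ : all of norm ≤ 1}`, the net
`q(e_α a, b e_β)` converges in norm to `q(a,b)`, and `A` is a strictly essential
quasi-ideal of `QM(A)`: `sup{‖a ◁ q ▷ b‖ : ‖a‖ ≤ 1, ‖b‖ ≤ 1} = ‖q‖`. -/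
theorem statement19 {A : Type*} [NonUnitalCStarAlgebra A]
    {ι : Type*} (l : Filter ι) [l.NeBot] (e : ι → A)
    (he_norm : ∀ i, ‖e i‖ ≤ 1)
    (he_left : ∀ a : A, Tendsto (fun i => e i * a) l (nhds a))
    (he_right : ∀ a : A, Tendsto (fun i => a * e i) l (nhds a))
    (q : A → A → A)
    (hq : ∀ a b c d, q (c * a) (b * d) = c * q a b * d)
    (hq_add₁ : ∀ a a' b, q (a + a') b = q a b + q a' b)
    (hq_add₂ : ∀ a b b', q a (b + b') = q a b + q a b')
    (hq_bound : ∃ C : ℝ, ∀ a b, ‖q a b‖ ≤ C * ‖a‖ * ‖b‖) :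
    -- `‖q‖ = sup{‖a q(c,d) b‖ : a, b, c, d in the unit ball}`
    (sSup {r : ℝ | ∃ a b c d : A, ‖a‖ ≤ 1 ∧ ‖b‖ ≤ 1 ∧ ‖c‖ ≤ 1 ∧ ‖d‖ ≤ 1 ∧
        r = ‖a * q c d * b‖}
      = sSup {r : ℝ | ∃ a b : A, ‖a‖ ≤ 1 ∧ ‖b‖ ≤ 1 ∧ r = ‖q a b‖}) ∧
    -- the net `q(e_α a, b e_β)` converges in norm to `q(a,b)`
    (∀ a b : A, Tendsto (fun p : ι × ι => q (e p.1 * a) (b * e p.2))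
        (l ×ˢ l) (nhds (q a b))) ∧
    -- `A` is a strictly essential quasi-ideal of `QM(A)`:
    -- `sup{‖a ◁ q ▷ b‖ : ‖a‖ ≤ 1, ‖b‖ ≤ 1} = ‖q‖`, where `(a ◁ q ▷ b)(c,d) = q(ca, bd)`
    (sSup {r : ℝ | ∃ a b : A, ‖a‖ ≤ 1 ∧ ‖b‖ ≤ 1 ∧
        r = sSup {s : ℝ | ∃ c d : A, ‖c‖ ≤ 1 ∧ ‖d‖ ≤ 1 ∧ s = ‖q (c * a) (b * d)‖}}
      = sSup {r : ℝ | ∃ a b : A, ‖a‖ ≤ 1 ∧ ‖b‖ ≤ 1 ∧ r = ‖q a b‖}) := by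
  obtain ⟨C, hC⟩ := hq_bound
  set C' : ℝ := max C 0 with hC'def
  have hC'0 : 0 ≤ C' := le_max_right _ _
  have hC' : ∀ a b : A, ‖q a b‖ ≤ C' * ‖a‖ * ‖b‖ := by
    intro a b
    refine (hC a b).trans ?_
    nlinarith [mul_nonneg (norm_nonneg a) (norm_nonneg b), le_max_left C (0:ℝ)]
  -- subtraction rules for q
  have hsub₁ : ∀ a a' b : A, q (a - a') b = q a b - q a' b := by
    intro a a' b
    have := hq_add₁ (a - a') a' b
    rw [sub_add_cancel] at this
    exact eq_sub_of_add_eq this.symm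
  have hsub₂ : ∀ (a : A) (b b' : A), q a (b - b') = q a b - q a b' := by
    intro a b b'
    have := hq_add₂ a (b - b') b'
    rw [sub_add_cancel] at this
    exact eq_sub_of_add_eq this.symm
  -- sets
  set S1 := {r : ℝ | ∃ a b c d : A, ‖a‖ ≤ 1 ∧ ‖b‖ ≤ 1 ∧ ‖c‖ ≤ 1 ∧ ‖d‖ ≤ 1 ∧
      r = ‖a * q c d * b‖} with hS1
  set S2 := {r : ℝ | ∃ a b : A, ‖a‖ ≤ 1 ∧ ‖b‖ ≤ 1 ∧ r = ‖q a b‖} with hS2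
  have hS1ne : S1.Nonempty := ⟨‖(0:A) * q 0 0 * 0‖, 0, 0, 0, 0, by simp, by simp, by simp, by simp, rfl⟩
  have hS2ne : S2.Nonempty := ⟨‖q (0:A) 0‖, 0, 0, by simp, by simp, rfl⟩
  have hS1ub : ∀ r ∈ S1, r ≤ C' := by
    rintro r ⟨a, b, c, d, ha, hb, hc, hd, rfl⟩
    calc ‖a * q c d * b‖ ≤ ‖a‖ * ‖q c d‖ * ‖b‖ := by
          calc ‖a * q c d * b‖ ≤ ‖a * q c d‖ * ‖b‖ := norm_mul_le _ _
            _ ≤ ‖a‖ * ‖q c d‖ * ‖b‖ := by gcongr; exact norm_mul_le _ _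
      _ ≤ 1 * (C' * ‖c‖ * ‖d‖) * 1 := by gcongr; exact hC' c d
      _ ≤ 1 * (C' * 1 * 1) * 1 := by gcongr
      _ = C' := by ring
  have hS2ub : ∀ r ∈ S2, r ≤ C' := by
    rintro r ⟨a, b, ha, hb, rfl⟩
    calc ‖q a b‖ ≤ C' * ‖a‖ * ‖b‖ := hC' a b
      _ ≤ C' * 1 * 1 := by gcongr
      _ = C' := by ring
  have part1 : sSup S1 = sSup S2 := by
    refine le_antisymm (csSup_le hS1ne ?_) (csSup_le hS2ne ?_)
    · rintro r ⟨a, b, c, d, ha, hb, hc, hd, rfl⟩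
      rw [← hq c d a b]
      refine le_csSup ⟨C', hS2ub⟩ ⟨a * c, d * b, ?_, ?_, rfl⟩
      · calc ‖a * c‖ ≤ ‖a‖ * ‖c‖ := norm_mul_le _ _
          _ ≤ 1 * 1 := by gcongr
          _ = 1 := one_mul 1
      · calc ‖d * b‖ ≤ ‖d‖ * ‖b‖ := norm_mul_le _ _
          _ ≤ 1 * 1 := by gcongr
          _ = 1 := one_mul 1
    · rintro r ⟨a, b, ha, hb, rfl⟩
      rw [← aux_sup l e he_norm he_left he_right (q a b)]
      refine csSup_le_csSup ⟨C', hS1ub⟩ ⟨‖(0:A) * q a b * 0‖, 0, 0, by simp, by simp, rfl⟩ ?_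
      rintro s ⟨c, d, hc, hd, rfl⟩
      exact ⟨c, d, a, b, hc, hd, ha, hb, rfl⟩
  have part2 : ∀ a b : A, Tendsto (fun p : ι × ι => q (e p.1 * a) (b * e p.2))
      (l ×ˢ l) (nhds (q a b)) := by
    intro a b
    rw [tendsto_iff_norm_sub_tendsto_zero]
    have h1 : Tendsto (fun p : ι × ι => C' * ‖b‖ * ‖e p.1 * a - a‖) (l ×ˢ l) (nhds 0) := by
      have := ((tendsto_iff_norm_sub_tendsto_zero.mp (he_left a)).comp
        (tendsto_fst : Tendsto Prod.fst (l ×ˢ l) l)).const_mul (C' * ‖b‖)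
      simpa using this
    have h2 : Tendsto (fun p : ι × ι => C' * ‖a‖ * ‖b * e p.2 - b‖) (l ×ˢ l) (nhds 0) := by
      have := ((tendsto_iff_norm_sub_tendsto_zero.mp (he_right b)).comp
        (tendsto_snd : Tendsto Prod.snd (l ×ˢ l) l)).const_mul (C' * ‖a‖)
      simpa using this
    have hsum := h1.add h2
    rw [add_zero] at hsum
    refine squeeze_zero (fun p => norm_nonneg _) (fun p => ?_) hsum
    have hdecomp : q (e p.1 * a) (b * e p.2) - q a b
        = q (e p.1 * a - a) (b * e p.2) + q a (b * e p.2 - b) := by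
      rw [hsub₁, hsub₂]; abel
    calc ‖q (e p.1 * a) (b * e p.2) - q a b‖
        ≤ ‖q (e p.1 * a - a) (b * e p.2)‖ + ‖q a (b * e p.2 - b)‖ := by
          rw [hdecomp]; exact norm_add_le _ _
      _ ≤ C' * ‖b‖ * ‖e p.1 * a - a‖ + C' * ‖a‖ * ‖b * e p.2 - b‖ := by
          gcongr ?_ + ?_
          · calc ‖q (e p.1 * a - a) (b * e p.2)‖
                ≤ C' * ‖e p.1 * a - a‖ * ‖b * e p.2‖ := hC' _ _
              _ ≤ C' * ‖e p.1 * a - a‖ * (‖b‖ * ‖e p.2‖) := by gcongr; exact norm_mul_le _ _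
              _ ≤ C' * ‖e p.1 * a - a‖ * (‖b‖ * 1) := by gcongr; exact he_norm _
              _ = C' * ‖b‖ * ‖e p.1 * a - a‖ := by ring
          · exact hC' _ _
  have part3 : sSup {r : ℝ | ∃ a b : A, ‖a‖ ≤ 1 ∧ ‖b‖ ≤ 1 ∧
      r = sSup {s : ℝ | ∃ c d : A, ‖c‖ ≤ 1 ∧ ‖d‖ ≤ 1 ∧ s = ‖q (c * a) (b * d)‖}}
      = sSup S2 := by
    have hinner : ∀ a b : A,
        sSup {s : ℝ | ∃ c d : A, ‖c‖ ≤ 1 ∧ ‖d‖ ≤ 1 ∧ s = ‖q (c * a) (b * d)‖} = ‖q a b‖ := by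
      intro a b
      have hseteq : {s : ℝ | ∃ c d : A, ‖c‖ ≤ 1 ∧ ‖d‖ ≤ 1 ∧ s = ‖q (c * a) (b * d)‖}
          = {s : ℝ | ∃ c d : A, ‖c‖ ≤ 1 ∧ ‖d‖ ≤ 1 ∧ s = ‖c * q a b * d‖} := by
        ext s; simp only [Set.mem_setOf_eq, hq]
      rw [hseteq]
      exact aux_sup l e he_norm he_left he_right (q a b)
    have hset : {r : ℝ | ∃ a b : A, ‖a‖ ≤ 1 ∧ ‖b‖ ≤ 1 ∧
        r = sSup {s : ℝ | ∃ c d : A, ‖c‖ ≤ 1 ∧ ‖d‖ ≤ 1 ∧ s = ‖q (c * a) (b * d)‖}} = S2 := by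
      ext r
      simp only [Set.mem_setOf_eq, hinner, hS2]
    rw [hset]
  exact ⟨part1, part2, part3⟩
end
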